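/- Let X be a compact metric space, f₁,…,f_k continuous self-maps, ℙ the Bernoulli measure on Σ = {1,…,k}^ℕ with positive weights, and Q ⊆ X. Suppose there exists ℓ ∈ ℕ such that p := inf over y in the orbit of x of the probability (under the uniform measure on words of length ℓ) that some prefix of the word maps y into Q, is strictly positive. Then for ℙ-almost every ω ∈ Σ, there exists n ≥ 1 with f^n_ω(x) ∈ Q. -/

import Mathlib

open MeasureTheory
open scoped ENNReal

/-!
Let `B_n` be the set of words of length `n` along which the orbit of `x` avoids `Q` at the
times `1, …, n`. A word of `B_{n+ℓ}` splits as `uv` with `u ∈ B_n` and `v` avoiding `Q` from the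
point `f_u(x)`, which lies in the orbit of `x`; the hypothesis therefore gives
`ℙ(B_{n+ℓ}) ≤ (1 - p) ℙ(B_n)`, hence `ℙ(B_{mℓ}) ≤ (1 - p)^m`. The set of `ω` that never
enter `Q` lies in the cylinder over `B_{mℓ}` for every `m`, so it is null.
-/

/-- Apply the maps of an IFS along a finite word: `f_{w_n} ∘ ⋯ ∘ f_{w_1}`. -/
def applyWord {X : Type*} {k : ℕ} (f : Fin k → X → X) (w : List (Fin k)) (x : X) : X :=
  w.foldl (fun y i => f i y) x

/-- The fiberwise iterate `f^n_ω(x) = f_{ω_n} ∘ ⋯ ∘ f_{ω_1}(x)` (0-indexed `ω`). -/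
def fIter {X : Type*} {k : ℕ} (f : Fin k → X → X) (ω : ℕ → Fin k) (x : X) : ℕ → X
  | 0 => x
  | n + 1 => f (ω n) (fIter f ω x n)

noncomputable def wordMass {k n : ℕ} (pw : Fin k → ℝ≥0∞) (T : Set (Fin n → Fin k)) : ℝ≥0∞ :=
  ∑ w, T.indicator (fun w => ∏ i, pw (w i)) w

section WordMass

variable {k : ℕ} (pw : Fin k → ℝ≥0∞)

theorem wordMass_eq_sum_toFinset {n : ℕ} (T : Set (Fin n → Fin k)) [Fintype T] :
    wordMass pw T = ∑ w ∈ T.toFinset, ∏ i, pw (w i) := by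
  classical
  rw [wordMass, Finset.sum_indicator_eq_sum_filter]
  congr 1; ext; simp

theorem wordMass_univ (hsum : ∑ i, pw i = 1) (n : ℕ) :
    wordMass pw (Set.univ : Set (Fin n → Fin k)) = 1 := by
  classical
  simp only [wordMass, Set.indicator_univ]
  rw [← Fintype.prod_sum (fun _ : Fin n => pw), hsum, Finset.prod_const_one]

theorem wordMass_add_compl {n : ℕ} (T : Set (Fin n → Fin k)) :
    wordMass pw T + wordMass pw Tᶜ = wordMass pw (Set.univ : Set (Fin n → Fin k)) := by
  simp only [wordMass, ← Finset.sum_add_distrib, Set.indicator_self_add_compl_apply,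
    Set.indicator_univ]

theorem wordMass_le_one (hsum : ∑ i, pw i = 1) {n : ℕ} (T : Set (Fin n → Fin k)) :
    wordMass pw T ≤ 1 :=
  wordMass_univ pw hsum n ▸ wordMass_add_compl pw T ▸ le_self_add

theorem wordMass_compl_le (hsum : ∑ i, pw i = 1) {n : ℕ} {T : Set (Fin n → Fin k)}
    {p : ℝ≥0∞} (hp : p ≤ wordMass pw T) : wordMass pw Tᶜ ≤ 1 - p := by
  have hT := (wordMass_le_one pw hsum T).trans_lt ENNReal.one_lt_top
  have hcompl : wordMass pw Tᶜ = 1 - wordMass pw T :=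
    ENNReal.eq_sub_of_add_eq hT.ne (by rw [add_comm, wordMass_add_compl, wordMass_univ pw hsum])
  rw [hcompl]
  exact tsub_le_tsub_left hp 1

theorem wordMass_le_of_append {n ℓ : ℕ} {E : Set (Fin (n + ℓ) → Fin k)}
    {A : Set (Fin n → Fin k)} {B : (Fin n → Fin k) → Set (Fin ℓ → Fin k)} {c : ℝ≥0∞}
    (hE : ∀ u v, Fin.append u v ∈ E → u ∈ A ∧ v ∈ B u)
    (hB : ∀ u ∈ A, wordMass pw (B u) ≤ c) :
    wordMass pw E ≤ c * wordMass pw A := by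
  have hsplit : ∀ u v, E.indicator (fun w => ∏ i, pw (w i)) (Fin.append u v) ≤
      A.indicator (fun u => ∏ i, pw (u i)) u * (B u).indicator (fun v => ∏ i, pw (v i)) v := by
    intro u v
    by_cases h : Fin.append u v ∈ E
    · obtain ⟨hu, hv⟩ := hE u v h
      simp [Set.indicator_of_mem, h, hu, hv, Fin.prod_univ_add]
    · simp [Set.indicator_of_notMem h]
  have hbound : ∀ u, A.indicator (fun u => ∏ i, pw (u i)) u * wordMass pw (B u) ≤
      A.indicator (fun u => ∏ i, pw (u i)) u * c := by
    intro u
    by_cases hu : u ∈ A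
    · gcongr; exact hB u hu
    · simp [hu]
  calc wordMass pw E
      = ∑ uv : (Fin n → Fin k) × (Fin ℓ → Fin k),
          E.indicator (fun w => ∏ i, pw (w i)) (Fin.append uv.1 uv.2) :=
        (Fintype.sum_equiv (Fin.appendEquiv n ℓ) _ _ fun _ => rfl).symm
    _ ≤ ∑ uv : (Fin n → Fin k) × (Fin ℓ → Fin k),
          A.indicator (fun u => ∏ i, pw (u i)) uv.1 *
            (B uv.1).indicator (fun v => ∏ i, pw (v i)) uv.2 :=
        Finset.sum_le_sum fun uv _ => hsplit uv.1 uv.2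
    _ = ∑ u, A.indicator (fun u => ∏ i, pw (u i)) u * wordMass pw (B u) := by
        simp only [Fintype.sum_prod_type, wordMass, Finset.mul_sum]
    _ ≤ ∑ u, A.indicator (fun u => ∏ i, pw (u i)) u * c := Finset.sum_le_sum fun u _ => hbound u
    _ = c * wordMass pw A := by rw [← Finset.sum_mul, mul_comm, wordMass]

theorem measure_prefix_mem_eq_wordMass {μ : Measure (ℕ → Fin k)}
    (hcyl : ∀ (n : ℕ) (w : Fin n → Fin k), μ {ω | ∀ i : Fin n, ω i = w i} = ∏ i, pw (w i))
    {n : ℕ} (T : Set (Fin n → Fin k)) :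
    μ {ω | (fun i : Fin n => ω i) ∈ T} = wordMass pw T := by
  classical
  have hmeas : Measurable fun (ω : ℕ → Fin k) (i : Fin n) => ω i := by fun_prop
  calc μ {ω | (fun i : Fin n => ω i) ∈ T}
      = μ ((fun (ω : ℕ → Fin k) (i : Fin n) => ω i) ⁻¹' ↑T.toFinset) := by
        rw [Set.coe_toFinset]; rfl
    _ = ∑ w ∈ T.toFinset, μ ((fun (ω : ℕ → Fin k) (i : Fin n) => ω i) ⁻¹' {w}) :=
        (sum_measure_preimage_singleton _ fun _ _ => hmeas (measurableSet_singleton _)).symm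
    _ = wordMass pw T := by
        rw [wordMass_eq_sum_toFinset]
        refine Finset.sum_congr rfl fun w _ => ?_
        rw [← hcyl n w]
        congr 1; ext ω; simp [funext_iff]

end WordMass

section Orbit

variable {X : Type*} {k : ℕ} (f : Fin k → X → X) (Q : Set X)

theorem applyWord_append (w₁ w₂ : List (Fin k)) (x : X) :
    applyWord f (w₁ ++ w₂) x = applyWord f w₂ (applyWord f w₁ x) :=
  List.foldl_append

theorem fIter_eq_applyWord_ofFn (ω : ℕ → Fin k) (x : X) (n : ℕ) :
    fIter f ω x n = applyWord f (List.ofFn fun i : Fin n => ω i) x := by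
  induction n with
  | zero => rfl
  | succ n ih =>
    rw [List.ofFn_succ', List.concat_eq_append, applyWord_append]
    simp only [Fin.val_castSucc, Fin.val_last, ← ih]
    rfl

theorem applyWord_take_ofFn (ω : ℕ → Fin k) (x : X) {j n : ℕ} (h : j ≤ n) :
    applyWord f ((List.ofFn fun i : Fin n => ω i).take j) x = fIter f ω x j := by
  rw [← Fin.ofFn_take_eq_take_ofFn h, fIter_eq_applyWord_ofFn]
  rfl

def hitsWithin (y : X) (n : ℕ) : Set (Fin n → Fin k) :=
  {w | ∃ i : ℕ, 1 ≤ i ∧ i ≤ n ∧ applyWord f ((List.ofFn w).take i) y ∈ Q}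

variable {f Q}

theorem append_mem_hitsWithin_of_left {y : X} {n ℓ : ℕ} {u : Fin n → Fin k}
    (v : Fin ℓ → Fin k) (hu : u ∈ hitsWithin f Q y n) :
    Fin.append u v ∈ hitsWithin f Q y (n + ℓ) := by
  obtain ⟨i, hi, hin, hQ⟩ := hu
  refine ⟨i, hi, by omega, ?_⟩
  rwa [List.ofFn_fin_append, List.take_append_of_le_length (by simpa using hin)]

theorem append_mem_hitsWithin_of_right {y : X} {n ℓ : ℕ} (u : Fin n → Fin k)
    {v : Fin ℓ → Fin k} (hv : v ∈ hitsWithin f Q (applyWord f (List.ofFn u) y) ℓ) :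
    Fin.append u v ∈ hitsWithin f Q y (n + ℓ) := by
  obtain ⟨i, hi, hiℓ, hQ⟩ := hv
  refine ⟨n + i, by omega, by omega, ?_⟩
  have hlen : n + i = (List.ofFn u).length + i := by simp
  rwa [List.ofFn_fin_append, hlen, List.take_length_add_append, applyWord_append]

theorem prefix_mem_hitsWithin_iff (ω : ℕ → Fin k) (x : X) (n : ℕ) :
    (fun i : Fin n => ω i) ∈ hitsWithin f Q x n ↔ ∃ j, 1 ≤ j ∧ j ≤ n ∧ fIter f ω x j ∈ Q := by
  refine exists_congr fun j => and_congr_right fun _ => and_congr_right fun hjn => ?_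
  rw [applyWord_take_ofFn f ω x hjn]

theorem wordMass_compl_hitsWithin_mul_le {pw : Fin k → ℝ≥0∞} (hsum : ∑ i, pw i = 1)
    {x : X} {ℓ : ℕ} {c : ℝ≥0∞}
    (hc : ∀ w : List (Fin k), wordMass pw (hitsWithin f Q (applyWord f w x) ℓ)ᶜ ≤ c) (m : ℕ) :
    wordMass pw (hitsWithin f Q x (m * ℓ))ᶜ ≤ c ^ m := by
  induction m with
  | zero => simpa using wordMass_le_one pw hsum _
  | succ m ih =>
    rw [Nat.succ_mul, pow_succ']
    calc wordMass pw (hitsWithin f Q x (m * ℓ + ℓ))ᶜ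
        ≤ c * wordMass pw (hitsWithin f Q x (m * ℓ))ᶜ :=
          wordMass_le_of_append pw
            (fun u v h => ⟨fun hu => h (append_mem_hitsWithin_of_left v hu),
              fun hv => h (append_mem_hitsWithin_of_right u hv)⟩)
            (fun u _ => hc (List.ofFn u))
      _ ≤ c * c ^ m := by gcongr

end Orbit

theorem stmt18_general {X : Type*} {k : ℕ}
    (f : Fin k → X → X)
    (μ : Measure (ℕ → Fin k))
    (pw : Fin k → ℝ≥0∞) (hsum : ∑ i, pw i = 1)
    (hcyl : ∀ (n : ℕ) (w : Fin n → Fin k),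
      μ {ω | ∀ i : Fin n, ω i = w i} = ∏ i, pw (w i))
    (Q : Set X) (x : X) (ℓ : ℕ) (p : ℝ≥0∞) (hp : 0 < p)
    -- for every `y` in the orbit of `x`, the words of length `ℓ` having a prefix
    -- mapping `y` into `Q` carry probability at least `p`
    (hinf : ∀ y ∈ {z | ∃ w : List (Fin k), z = applyWord f w x},
      p ≤ ∑ w : Fin ℓ → Fin k,
        Set.indicator
          {w : Fin ℓ → Fin k |
            ∃ i : ℕ, 1 ≤ i ∧ i ≤ ℓ ∧ applyWord f ((List.ofFn w).take i) y ∈ Q}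
          (fun w => ∏ i, pw (w i)) w) :
    ∀ᵐ ω ∂μ, ∃ n : ℕ, 1 ≤ n ∧ fIter f ω x n ∈ Q := by
  -- `hinf y` is `p ≤ wordMass pw (hitsWithin f Q y ℓ)` once the definitions are unfolded
  have hblock (w : List (Fin k)) : wordMass pw (hitsWithin f Q (applyWord f w x) ℓ)ᶜ ≤ 1 - p :=
    wordMass_compl_le pw hsum (hinf _ ⟨w, rfl⟩)
  have hmiss (m : ℕ) : μ {ω | ¬∃ n, 1 ≤ n ∧ fIter f ω x n ∈ Q} ≤ (1 - p) ^ m :=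
    calc μ {ω | ¬∃ n, 1 ≤ n ∧ fIter f ω x n ∈ Q}
        ≤ μ {ω | (fun i : Fin (m * ℓ) => ω i) ∈ (hitsWithin f Q x (m * ℓ))ᶜ} :=
          measure_mono fun ω hω hhit => by
            obtain ⟨j, hj, -, hQ⟩ := (prefix_mem_hitsWithin_iff ω x _).1 hhit
            exact hω ⟨j, hj, hQ⟩
      _ = wordMass pw (hitsWithin f Q x (m * ℓ))ᶜ := measure_prefix_mem_eq_wordMass pw hcyl _
      _ ≤ (1 - p) ^ m := wordMass_compl_hitsWithin_mul_le hsum hblock m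
  have hlt : 1 - p < 1 := ENNReal.sub_lt_self ENNReal.one_ne_top one_ne_zero hp.ne'
  exact ae_iff.2 <| le_antisymm
    (ge_of_tendsto (ENNReal.tendsto_pow_atTop_nhds_zero_of_lt_one hlt) (.of_forall hmiss)) bot_le

theorem stmt18 {X : Type*} [MetricSpace X] [CompactSpace X] {k : ℕ}
    (f : Fin k → X → X) (hf : ∀ i, Continuous (f i))
    (μ : Measure (ℕ → Fin k)) [IsProbabilityMeasure μ]
    (pw : Fin k → ℝ≥0∞) (hpos : ∀ i, 0 < pw i) (hsum : ∑ i, pw i = 1)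
    (hcyl : ∀ (n : ℕ) (w : Fin n → Fin k),
      μ {ω | ∀ i : Fin n, ω i = w i} = ∏ i, pw (w i))
    (Q : Set X) (x : X) (ℓ : ℕ) (hℓ : 1 ≤ ℓ) (p : ℝ≥0∞) (hp : 0 < p)
    -- for every `y` in the orbit of `x`, the words of length `ℓ` having a prefix
    -- mapping `y` into `Q` carry probability at least `p`
    (hinf : ∀ y ∈ {z | ∃ w : List (Fin k), z = applyWord f w x},
      p ≤ ∑ w : Fin ℓ → Fin k,
        Set.indicator
          {w : Fin ℓ → Fin k |
            ∃ i : ℕ, 1 ≤ i ∧ i ≤ ℓ ∧ applyWord f ((List.ofFn w).take i) y ∈ Q}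
          (fun w => ∏ i, pw (w i)) w) :
    ∀ᵐ ω ∂μ, ∃ n : ℕ, 1 ≤ n ∧ fIter f ω x n ∈ Q :=
  stmt18_general f μ pw hsum hcyl Q x ℓ p hp hinf
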